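/- arXiv:2107.03171 — 2 statements merged into one kernel-verified Lean document; each statement's English description precedes it below -/
import Mathlib

section
/- Let m ≥ 2, d ≥ 1 and M be positive integers with M > m^{10d}. Let X ⊆ {0,1}^m with |X| = M, and let 𝐅 be a finitely supported probability distribution over functions {0,1}^m → {0,1} such that for every function g : X → {0,1}, Pr_{F∼𝐅}[ F(x) = g(x) for all x ∈ X ] = 2^{−M} (equivalently, the values (F(x))_{x∈X} are independent uniform bits). Then Pr_{F∼𝐅}[ pdeg_{1/10}(F) ≤ d ] < 1/10. -/
open scoped Classical

noncomputable def evalBool {ι : Type} (a : ι → Bool) (P : MvPolynomial ι ℝ) : ℝ :=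
  MvPolynomial.eval (fun i => if a i then (1:ℝ) else 0) P

def HasProbPoly {ι : Type} (f : (ι → Bool) → Bool) (ε : ℝ) (d : ℕ) : Prop :=
  ∃ (k : ℕ) (w : Fin k → ℝ) (P : Fin k → MvPolynomial ι ℝ),
    (∀ i, 0 ≤ w i) ∧ (∑ i, w i = 1) ∧ (∀ i, (P i).totalDegree ≤ d) ∧
    ∀ a : ι → Bool,
      ∑ i ∈ Finset.univ.filter
          (fun i => evalBool a (P i) ≠ (if f a then (1:ℝ) else 0)), w i ≤ ε

noncomputable def pdeg {ι : Type} (ε : ℝ) (f : (ι → Bool) → Bool) : ℕ :=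
  sInf {d | HasProbPoly f ε d}

def TrulyVariate {ι : Type} (f : (ι → Bool) → Bool) : Prop :=
  ∀ i : ι, ∃ a, f (Function.update a i (!(a i))) ≠ f a

def ORf (n : ℕ) : (Fin n → Bool) → Bool := fun a => decide (∃ i, a i = true)

noncomputable def sensitivity {n : ℕ} (f : (Fin n → Bool) → Bool) : ℕ :=
  Finset.univ.sup (fun a : Fin n → Bool =>
    (Finset.univ.filter (fun i : Fin n => f (Function.update a i (!(a i))) ≠ f a)).card)

/-!
If `pdeg_{1/10} F ≤ d`, averaging over the probabilistic polynomial yields a single polynomial `P`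
of degree at most `d` that agrees with `F` on all but `|X|/10` points of `X`. The indicator vector
of `F` on `X` then lies in the span of the degree-`≤ d` polynomial functions on `X` and of the unit
vectors at the error set `E`, a space of dimension at most `(m+1)^d + |E|`, and a `D`-dimensional
subspace contains at most `2^D` vectors with `0/1` coordinates. So at most
`2^((m+1)^d) ∑_{|E| ≤ M/10} 2^|E| ≤ 2^((m+1)^d) 9^(M/10) (11/9)^M` restrictions to `X` are close
to degree `d`; each has probability `2^(-M)`, and `m^(10d) < M` makes the total less than `1/10`.
-/

open Finset Module MvPolynomial

theorem card_le_two_pow_finrank_of_forall_eq_or_eq {K κ : Type*} [Field K] [Fintype κ]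
    (V : Submodule K (κ → K)) (a b : κ → K) (Z : Finset (κ → K))
    (hZV : ∀ v ∈ Z, v ∈ V) (hZ : ∀ v ∈ Z, ∀ x, v x = a x ∨ v x = b x) :
    #Z ≤ 2 ^ finrank K V := by
  induction hn : finrank K V using Nat.strong_induction_on generalizing V a b Z with
  | _ n ih =>
  by_cases hZ1 : #Z ≤ 1
  · exact hZ1.trans Nat.one_le_two_pow
  obtain ⟨u, hu, v, hv, huv⟩ := one_lt_card.mp (not_le.mp hZ1)
  obtain ⟨x, hx⟩ := Function.ne_iff.mp huv
  set V' := V ⊓ LinearMap.ker (LinearMap.proj x : (κ → K) →ₗ[K] K)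
  have hV' : finrank K V' < n := by
    refine hn ▸ Submodule.finrank_lt_finrank_of_lt (inf_lt_left.mpr fun hle => hx ?_)
    exact sub_eq_zero.mp (LinearMap.mem_ker.mp (hle (V.sub_mem (hZV u hu) (hZV v hv))))
  -- a fibre of the coordinate `x`, translated by one of its points, lies in `V'`; this is why
  -- the coordinates take two arbitrary values `a x, b x` rather than `0, 1`
  have hfibre : ∀ c, #{v ∈ Z | v x = c} ≤ 2 ^ finrank K V' := by
    intro c
    rcases (Z.filter (· x = c)).eq_empty_or_nonempty with h | ⟨w, hw⟩
    · simp [h]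
    rw [mem_filter] at hw
    rw [← card_image_of_injective _ (sub_left_injective (b := w))]
    refine ih _ hV' V' (a - w) (b - w) _ ?_ ?_ rfl
    · simp only [mem_image, mem_filter]
      rintro _ ⟨v, ⟨hvZ, hvc⟩, rfl⟩
      exact ⟨V.sub_mem (hZV v hvZ) (hZV w hw.1), by simp [hvc, hw.2]⟩
    · simp only [mem_image, mem_filter]
      rintro _ ⟨v, ⟨hvZ, -⟩, rfl⟩ y
      rcases hZ v hvZ y with h | h <;> simp [h]
  have hsplit : Z ⊆ {v ∈ Z | v x = a x} ∪ {v ∈ Z | v x = b x} := fun v hv => by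
    rcases hZ v hv x with h | h <;> simp [hv, h]
  calc #Z ≤ 2 ^ finrank K V' + 2 ^ finrank K V' :=
        (card_le_card hsplit).trans <| (card_union_le _ _).trans <| add_le_add (hfibre _) (hfibre _)
    _ ≤ 2 ^ n := by rw [← two_mul, ← pow_succ']; exact Nat.pow_le_pow_right two_pos hV'

theorem card_indicator_mem_le {K κ : Type*} [Field K] [Fintype κ] [DecidableEq κ]
    (V : Submodule K (κ → K)) :
    #{g : κ → Bool | (fun x => if g x then (1 : K) else 0) ∈ V} ≤ 2 ^ finrank K V := by
  have hinj : Function.Injective fun (g : κ → Bool) x => if g x then (1 : K) else 0 :=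
    fun g g' h => funext fun x => by
      have := congrFun h x
      cases hg : g x <;> cases hg' : g' x <;> simp [hg, hg'] at this ⊢
  rw [← card_image_of_injective _ hinj]
  refine card_le_two_pow_finrank_of_forall_eq_or_eq V 1 0 _ ?_ ?_ <;>
    simp only [mem_image, mem_filter, mem_univ, true_and]
  · rintro _ ⟨g, hg, rfl⟩
    exact hg
  · rintro _ ⟨g, -, rfl⟩ x
    cases g x <;> simp

theorem mem_sup_span_basisFun_of_mem {K κ : Type*} [Field K] [Fintype κ]
    {V : Submodule K (κ → K)} {u : κ → K} (hu : u ∈ V) (v : κ → K) :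
    v ∈ V ⊔ Submodule.span K (Pi.basisFun K κ '' {x | u x ≠ v x}) := by
  have hvu : v - u ∈ Submodule.span K (Pi.basisFun K κ '' {x | u x ≠ v x}) := by
    rw [Basis.mem_span_image]
    intro x hx
    simpa [sub_eq_zero, eq_comm] using hx
  simpa using Submodule.add_mem_sup hu hvu

theorem exists_prod_elim_X_eq_monomial {R σ : Type*} [CommSemiring R] :
    ∀ {d : ℕ} {s : σ →₀ ℕ}, s.degree ≤ d →
      ∃ c : Fin d → Option σ, ∏ j, (c j).elim 1 X = (monomial s 1 : MvPolynomial σ R)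
  | 0, s, hs => ⟨Fin.elim0, by simp [(Finsupp.degree_eq_zero_iff s).mp (Nat.le_zero.mp hs)]⟩
  | d + 1, s, hs => by
    by_cases hs0 : s = 0
    · exact ⟨fun _ => none, by simp [hs0]⟩
    obtain ⟨i, hi⟩ := Finsupp.ne_iff.mp hs0
    have hdeg : (s - Finsupp.single i 1).degree ≤ d := by
      have := congrArg Finsupp.degree (Finsupp.sub_add_single_one_cancel hi)
      rw [map_add, Finsupp.degree_single] at this
      omega
    obtain ⟨c, hc⟩ := exists_prod_elim_X_eq_monomial (R := R) hdeg
    refine ⟨Fin.cons (some i) c, ?_⟩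
    rw [Fin.prod_univ_succ]
    simp only [Fin.cons_zero, Fin.cons_succ, Option.elim_some, hc, X, monomial_mul, one_mul]
    rw [add_comm, Finsupp.sub_add_single_one_cancel hi]

theorem finrank_restrictTotalDegree_le (σ K : Type*) [Field K] [Fintype σ] (d : ℕ) :
    finrank K (restrictTotalDegree σ K d) ≤ (Fintype.card σ + 1) ^ d := by
  have hspan : restrictTotalDegree σ K d ≤
      Submodule.span K (Set.range fun c : Fin d → Option σ => ∏ j, (c j).elim 1 X) := by
    rw [restrictTotalDegree, restrictSupport_eq_span, Submodule.span_le]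
    rintro _ ⟨s, hs, rfl⟩
    obtain ⟨c, hc⟩ := exists_prod_elim_X_eq_monomial (R := K) (d := d) (s := s) hs
    exact Submodule.subset_span ⟨c, hc⟩
  have := FiniteDimensional.span_of_finite K (Set.finite_range
    fun c : Fin d → Option σ => (∏ j, (c j).elim 1 X : MvPolynomial σ K))
  calc finrank K (restrictTotalDegree σ K d) ≤ _ := Submodule.finrank_mono hspan
    _ ≤ Fintype.card (Fin d → Option σ) := finrank_range_le_card _
    _ = (Fintype.card σ + 1) ^ d := by simp

noncomputable def cubeEval {ι : Type} (X : Finset (ι → Bool)) : MvPolynomial ι ℝ →ₗ[ℝ] (X → ℝ) :=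
  LinearMap.pi fun x => (aeval fun i => if x.1 i then (1 : ℝ) else 0).toLinearMap

@[simp] theorem cubeEval_apply {ι : Type} (X : Finset (ι → Bool)) (P : MvPolynomial ι ℝ) (x : X) :
    cubeEval X P x = evalBool x.1 P := by
  simp [cubeEval, evalBool]

theorem evalBool_prod_ite_X {ι : Type} [Fintype ι] (a b : ι → Bool) :
    evalBool a (∏ i, if b i then X i else 1 - X i) = if a = b then 1 else 0 := by
  have hfactor : ∀ i, eval (fun i => if a i then (1 : ℝ) else 0)
      (if b i then X i else 1 - X i) = if a i = b i then 1 else 0 := fun i => by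
    cases ha : a i <;> cases b i <;> simp [ha]
  simp only [evalBool, map_prod, hfactor, prod_boole, mem_univ, true_implies, _root_.funext_iff]

theorem exists_evalBool_eq {ι : Type} [Fintype ι] (f : (ι → Bool) → ℝ) :
    ∃ P : MvPolynomial ι ℝ, ∀ a, evalBool a P = f a :=
  ⟨∑ b, C (f b) * ∏ i, if b i then X i else 1 - X i, fun a => by
    have h := evalBool_prod_ite_X a
    simp only [evalBool] at h ⊢
    simp [h]⟩

theorem hasProbPoly_of_pdeg_le {ι : Type} [Fintype ι] {f : (ι → Bool) → Bool} {ε : ℝ}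
    (hε : 0 ≤ ε) {d : ℕ} (h : pdeg ε f ≤ d) : HasProbPoly f ε d := by
  obtain ⟨P, hP⟩ := exists_evalBool_eq fun a => if f a then 1 else 0
  have hexact : HasProbPoly f ε P.totalDegree :=
    ⟨1, fun _ => 1, fun _ => P, fun _ => zero_le_one, by simp, fun _ => le_rfl, by simp [hP, hε]⟩
  obtain ⟨k, w, Q, hw, hw1, hQ, herr⟩ : HasProbPoly f ε (pdeg ε f) :=
    Nat.sInf_mem (s := {d | HasProbPoly f ε d}) ⟨_, hexact⟩
  exact ⟨k, w, Q, hw, hw1, fun i => (hQ i).trans h, herr⟩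

theorem exists_le_of_sum_mul_le {ι : Type*} [Fintype ι] {w f : ι → ℝ} {c : ℝ}
    (hw : ∀ i, 0 ≤ w i) (hw1 : ∑ i, w i = 1) (h : ∑ i, w i * f i ≤ c) : ∃ i, f i ≤ c := by
  have : Nonempty ι := not_isEmpty_iff.mp fun _ => by simp at hw1
  obtain ⟨j, hj⟩ := Finite.exists_min f
  refine ⟨j, le_trans ?_ h⟩
  calc f j = ∑ i, w i * f j := by rw [← sum_mul, hw1, one_mul]
    _ ≤ ∑ i, w i * f i := sum_le_sum fun i _ => mul_le_mul_of_nonneg_left (hj i) (hw i)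

theorem HasProbPoly.exists_card_errors_le {ι : Type} {f : (ι → Bool) → Bool} {ε : ℝ} {d : ℕ}
    (h : HasProbPoly f ε d) (X : Finset (ι → Bool)) :
    ∃ P : MvPolynomial ι ℝ, P.totalDegree ≤ d ∧
      (#{x ∈ X | evalBool x P ≠ if f x then 1 else 0} : ℝ) ≤ ε * #X := by
  obtain ⟨k, w, P, hw, hw1, hP, herr⟩ := h
  obtain ⟨j, hj⟩ := exists_le_of_sum_mul_le
    (f := fun j => (#{x ∈ X | evalBool x (P j) ≠ if f x then 1 else 0} : ℝ)) hw hw1 <| by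
    calc ∑ j, w j * #{x ∈ X | evalBool x (P j) ≠ if f x then 1 else 0}
        = ∑ x ∈ X, ∑ j with evalBool x (P j) ≠ if f x then 1 else 0, w j := by
          simp only [card_filter, Nat.cast_sum, mul_sum, sum_filter]
          rw [sum_comm]
          simp
      _ ≤ ∑ _x ∈ X, ε := sum_le_sum fun x _ => herr x
      _ = ε * #X := by rw [sum_const, nsmul_eq_mul, mul_comm]
  exact ⟨P j, hP j, hj⟩

noncomputable def nearLowDegree {ι : Type} [Fintype ι] (X : Finset (ι → Bool)) (d t : ℕ) :
    Finset (X → Bool) :=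
  {g | ∃ P : MvPolynomial ι ℝ, P.totalDegree ≤ d ∧
    #{x | evalBool x.1 P ≠ if g x then 1 else 0} ≤ t}

theorem card_nearLowDegree_le {ι : Type} [Fintype ι] (X : Finset (ι → Bool)) (d t : ℕ) :
    #(nearLowDegree X d t) ≤
      2 ^ (Fintype.card ι + 1) ^ d * ∑ E : Finset X with #E ≤ t, 2 ^ #E := by
  set V := (restrictTotalDegree ι ℝ d).map (cubeEval X)
  have hcover : nearLowDegree X d t ⊆ ({E : Finset X | #E ≤ t} : Finset _).biUnion fun E =>
      {g | (fun x => if g x then (1 : ℝ) else 0) ∈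
        V ⊔ Submodule.span ℝ (Pi.basisFun ℝ X '' E)} := by
    intro g hg
    obtain ⟨P, hP, hE⟩ := (mem_filter.mp hg).2
    refine mem_biUnion.mpr ⟨_, mem_filter.mpr ⟨mem_univ _, hE⟩, mem_filter.mpr ⟨mem_univ _, ?_⟩⟩
    have hPV : cubeEval X P ∈ V :=
      Submodule.mem_map_of_mem ((mem_restrictTotalDegree _ _ _).mpr hP)
    have hmem := mem_sup_span_basisFun_of_mem hPV fun x => if g x then (1 : ℝ) else 0
    rwa [show {x | cubeEval X P x ≠ if g x then 1 else 0} =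
      ↑({x | evalBool x.1 P ≠ if g x then 1 else 0} : Finset X) by ext; simp] at hmem
  have hfinrank : ∀ E : Finset X, finrank ℝ ↥(V ⊔ Submodule.span ℝ (Pi.basisFun ℝ X '' E)) ≤
      (Fintype.card ι + 1) ^ d + #E := fun E =>
    (Submodule.finrank_add_le_finrank_add_finrank _ _).trans <| add_le_add
      ((Submodule.finrank_map_le _ _).trans (finrank_restrictTotalDegree_le ι ℝ d))
      (by rw [← coe_image]; exact (finrank_span_finset_le_card _).trans card_image_le)
  calc #(nearLowDegree X d t)
      ≤ ∑ E : Finset X with #E ≤ t, 2 ^ ((Fintype.card ι + 1) ^ d + #E) :=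
        (card_le_card hcover).trans <| card_biUnion_le.trans <| sum_le_sum fun E _ =>
          (card_indicator_mem_le _).trans (Nat.pow_le_pow_right two_pos (hfinrank E))
    _ = _ := by simp only [pow_add, mul_sum]

theorem mem_nearLowDegree_of_pdeg_le {ι : Type} [Fintype ι] {f : (ι → Bool) → Bool} {d : ℕ}
    (h : pdeg (1 / 10) f ≤ d) (X : Finset (ι → Bool)) :
    (fun x : X => f x) ∈ nearLowDegree X d (#X / 10) := by
  obtain ⟨P, hP, herr⟩ := (hasProbPoly_of_pdeg_le (by norm_num) h).exists_card_errors_le X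
  refine mem_filter.mpr ⟨mem_univ _, P, hP, ?_⟩
  have hcard : #{x : X | evalBool x.1 P ≠ if f x then 1 else 0} =
      #{x ∈ X | evalBool x P ≠ if f x then 1 else 0} := by
    simp only [card_filter]
    exact sum_coe_sort X fun x => if evalBool x P ≠ (if f x then 1 else 0) then 1 else 0
  rw [hcard, Nat.le_div_iff_mul_le (by norm_num)]
  exact_mod_cast (by linarith : (#{x ∈ X | evalBool x P ≠ if f x then 1 else 0} : ℝ) * 10 ≤ #X)

theorem pow_card_mul_sum_pow_card_le {α : Type*} (s : Finset α) (a : ℕ) {b : ℕ} (hb : b ≠ 0)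
    (t : ℕ) : b ^ #s * ∑ E ∈ s.powerset with #E ≤ t, a ^ #E ≤ b ^ t * (a + b) ^ #s := by
  rw [← sum_pow_mul_eq_add_pow, mul_sum, mul_sum]
  refine (sum_le_sum fun E hE => ?_).trans (sum_le_sum_of_subset (filter_subset _ _))
  obtain ⟨hEs, hEt⟩ := mem_filter.mp hE
  have := card_le_card (mem_powerset.mp hEs)
  calc b ^ #s * a ^ #E ≤ b ^ (t + (#s - #E)) * a ^ #E :=
        Nat.mul_le_mul_right _ (Nat.pow_le_pow_right (Nat.pos_of_ne_zero hb) (by omega))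
    _ = b ^ t * (a ^ #E * b ^ (#s - #E)) := by ring

theorem ten_mul_two_pow_mul_lt {D t M : ℕ} (ht : 10 * t ≤ M) (hD : 10 * D + 34 ≤ 3 * M) :
    10 * (2 ^ D * 9 ^ t * 11 ^ M) < 18 ^ M := by
  rw [← Nat.pow_lt_pow_iff_left (n := 10) (by norm_num)]
  calc (10 * (2 ^ D * 9 ^ t * 11 ^ M)) ^ 10
      = 10 ^ 10 * 2 ^ (10 * D) * 9 ^ (10 * t) * 11 ^ (10 * M) := by ring
    _ ≤ 10 ^ 10 * 2 ^ (10 * D) * 9 ^ M * 11 ^ (10 * M) := by gcongr; norm_num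
    _ < 2 ^ 34 * 2 ^ (10 * D) * 9 ^ M * 11 ^ (10 * M) := by gcongr; norm_num
    _ ≤ 2 ^ (3 * M) * 9 ^ M * 11 ^ (10 * M) := by rw [← pow_add]; gcongr <;> omega
    _ = (2 ^ 3 * 9 * 11 ^ 10) ^ M := by
        rw [mul_pow, mul_pow, ← pow_mul, ← pow_mul, mul_comm 10 M]
    _ ≤ (18 ^ 10) ^ M := by gcongr; norm_num
    _ = (18 ^ M) ^ 10 := by rw [← pow_mul, ← pow_mul, mul_comm]

theorem ten_mul_add_le_of_pow_lt {m d M : ℕ} (hm : 2 ≤ m) (hd : 1 ≤ d)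
    (hM : m ^ (10 * d) < M) : 10 * (m + 1) ^ d + 34 ≤ 3 * M := by
  set D := (m + 1) ^ d
  have hD : 3 ≤ D := (by omega : 3 ≤ m + 1).trans (Nat.le_self_pow (by omega) _)
  have hD5 : D ^ 5 < M :=
    calc D ^ 5 ≤ ((m ^ 2) ^ d) ^ 5 :=
          Nat.pow_le_pow_left (Nat.pow_le_pow_left (by nlinarith) d) 5
      _ = m ^ (10 * d) := by rw [← pow_mul, ← pow_mul]; ring_nf
      _ < M := hM
  have : 81 * D ≤ D ^ 5 :=
    calc 81 * D = 3 ^ 4 * D := by norm_num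
      _ ≤ D ^ 4 * D := by gcongr
      _ = D ^ 5 := by ring
  omega

theorem ten_mul_card_nearLowDegree_lt {ι : Type} [Fintype ι] (X : Finset (ι → Bool)) {d : ℕ}
    (hι : 2 ≤ Fintype.card ι) (hd : 1 ≤ d) (hX : Fintype.card ι ^ (10 * d) < #X) :
    10 * #(nearLowDegree X d (#X / 10)) < 2 ^ #X := by
  set D := (Fintype.card ι + 1) ^ d
  set t := #X / 10
  have hbinom : 9 ^ #X * ∑ E : Finset X with #E ≤ t, 2 ^ #E ≤ 9 ^ t * 11 ^ #X := by
    have := pow_card_mul_sum_pow_card_le (univ : Finset X) 2 (b := 9) (by norm_num) t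
    rwa [powerset_univ, card_univ, Fintype.card_coe] at this
  have hnum := ten_mul_two_pow_mul_lt (Nat.mul_div_le #X 10) (ten_mul_add_le_of_pow_lt hι hd hX)
  refine Nat.lt_of_mul_lt_mul_left (a := 9 ^ #X) ?_
  calc 9 ^ #X * (10 * #(nearLowDegree X d t))
      ≤ 9 ^ #X * (10 * (2 ^ D * ∑ E : Finset X with #E ≤ t, 2 ^ #E)) := by
        gcongr; exact card_nearLowDegree_le X d t
    _ = 10 * 2 ^ D * (9 ^ #X * ∑ E : Finset X with #E ≤ t, 2 ^ #E) := by ring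
    _ ≤ 10 * 2 ^ D * (9 ^ t * 11 ^ #X) := by gcongr
    _ < 18 ^ #X := by linarith
    _ = 9 ^ #X * 2 ^ #X := by rw [← mul_pow]; norm_num

theorem sum_filter_restrict_mem_eq {α ι : Type*} [Fintype ι] (X : Finset α) {w : ι → ℝ}
    {F : ι → α → Bool} {p : ℝ}
    (hunif : ∀ g : α → Bool, ∑ i ∈ univ.filter (fun i => ∀ x ∈ X, F i x = g x), w i = p)
    (G : Finset (X → Bool)) :
    ∑ i ∈ univ.filter (fun i => (fun x : X => F i x) ∈ G), w i = #G * p := by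
  rw [← sum_fiberwise_of_maps_to (t := G) (g := fun i => fun x : X => F i x)
    fun i hi => (mem_filter.mp hi).2, ← nsmul_eq_mul, ← sum_const]
  refine sum_congr rfl fun g hg => ?_
  rw [← hunif fun x => if hx : x ∈ X then g ⟨x, hx⟩ else false]
  refine sum_congr (ext fun i => ?_) fun _ _ => rfl
  simp only [mem_filter, mem_univ, true_and, funext_iff, Subtype.forall]
  constructor
  · rintro ⟨-, h⟩ x hx
    simp [h x hx, hx]
  · intro h
    have hF : (fun x : X => F i x) = g := funext fun x => by simp [h x.1 x.2]
    exact ⟨hF ▸ hg, fun x hx => by simp [h x hx, hx]⟩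

theorem random_function_lower_bound_general (m d M : ℕ) (hm : 2 ≤ m) (hd : 1 ≤ d)
    (hM : m ^ (10 * d) < M)
    (X : Finset (Fin m → Bool)) (hX : X.card = M)
    (k : ℕ) (w : Fin k → ℝ) (F : Fin k → ((Fin m → Bool) → Bool))
    (hw : ∀ i, 0 ≤ w i)
    (hunif : ∀ g : (Fin m → Bool) → Bool,
      ∑ i ∈ Finset.univ.filter (fun i => ∀ x ∈ X, F i x = g x), w i
        = ((2:ℝ) ^ M)⁻¹) :
    ∑ i ∈ Finset.univ.filter (fun i => pdeg (1/10) (F i) ≤ d), w i < 1/10 := by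
  subst hX
  have hcard := ten_mul_card_nearLowDegree_lt X (by simpa using hm) hd (by simpa using hM)
  set G := nearLowDegree X d (#X / 10)
  calc ∑ i ∈ univ.filter (fun i => pdeg (1/10) (F i) ≤ d), w i
      ≤ ∑ i ∈ univ.filter (fun i => (fun x : X => F i x) ∈ G), w i :=
        sum_le_sum_of_subset_of_nonneg (fun i hi => mem_filter.mpr
          ⟨mem_univ _, mem_nearLowDegree_of_pdeg_le (mem_filter.mp hi).2 X⟩) fun i _ _ => hw i
    -- `convert` reconciles the different `Decidable` instances for `∀ x ∈ X, _`
    _ = #G * ((2 : ℝ) ^ #X)⁻¹ :=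
        sum_filter_restrict_mem_eq X (F := F) (w := w) (fun g => by convert hunif g) G
    _ < 1 / 10 := by
        have : (10 * #G : ℝ) < 2 ^ #X := by exact_mod_cast hcard
        rw [mul_inv_lt_iff₀ (by positivity)]
        linarith

theorem random_function_lower_bound (m d M : ℕ) (hm : 2 ≤ m) (hd : 1 ≤ d)
    (hM : m ^ (10 * d) < M)
    (X : Finset (Fin m → Bool)) (hX : X.card = M)
    (k : ℕ) (w : Fin k → ℝ) (F : Fin k → ((Fin m → Bool) → Bool))
    (hw : ∀ i, 0 ≤ w i) (hw1 : ∑ i, w i = 1)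
    (hunif : ∀ g : (Fin m → Bool) → Bool,
      ∑ i ∈ Finset.univ.filter (fun i => ∀ x ∈ X, F i x = g x), w i
        = ((2:ℝ) ^ M)⁻¹) :
    ∑ i ∈ Finset.univ.filter (fun i => pdeg (1/10) (F i) ≤ d), w i < 1/10 :=
  random_function_lower_bound_general m d M hm hd hM X hX k w F hw hunif
end

section
/- Let f : {0,1}^k → {0,1} and g₁, …, g_k : {0,1}^m → {0,1}, and let h : {0,1}^m → {0,1} be the composed function h(x) = f(g₁(x), …, g_k(x)). Then for any ε, δ ≥ 0 with ε + k·δ ≤ 1, pdeg_{ε + kδ}(h) ≤ pdeg_ε(f) · max_{i∈[k]} pdeg_δ(g_i). -/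
open scoped Classical

/-!
Draw `P` from the `ε`-error distribution for `f` and, independently, `Qᵢ` from the `δ`-error
distribution for each `gᵢ`, and output the substitution `P(Q₁, …, Qₖ)`, of degree at most
`deg P · maxᵢ deg Qᵢ`. At an input `x` it can only be wrong if `P` is wrong at
`(g₁(x), …, gₖ(x))` or some `Qᵢ` is wrong at `x`; the marginals of the product distribution are the
original ones, so the union bound gives error at most `ε + kδ`.
-/

open Finset MvPolynomial

section Sums

lemma sum_filter_le_add_sum_of_imp {κ ι : Type*} [Fintype ι] (s : Finset κ) {w : κ → ℝ}
    (hw : ∀ x, 0 ≤ w x) {p q : κ → Prop} {r : ι → κ → Prop}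
    [DecidablePred p] [DecidablePred q] [∀ i, DecidablePred (r i)]
    (h : ∀ x, p x → q x ∨ ∃ i, r i x) :
    ∑ x ∈ s with p x, w x ≤ ∑ x ∈ s with q x, w x + ∑ i, ∑ x ∈ s with r i x, w x := by
  simp only [sum_filter]
  rw [sum_comm, ← sum_add_distrib]
  refine sum_le_sum fun x _ => ?_
  have hnonneg : ∀ (t : Prop) [Decidable t], 0 ≤ if t then w x else 0 :=
    fun _ _ => ite_nonneg (hw x) le_rfl
  have hsum_nonneg := sum_nonneg fun i (_ : i ∈ univ) => hnonneg (r i x)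
  by_cases hp : p x
  · rcases h x hp with hq | ⟨i, hi⟩
    · simpa [hp, hq] using hsum_nonneg
    · refine le_add_of_nonneg_of_le (hnonneg _) ?_
      simpa [hp, hi] using single_le_sum (fun j _ => hnonneg (r j x)) (mem_univ i)
  · simpa [hp] using add_nonneg (hnonneg (q x)) hsum_nonneg

lemma sum_filter_fst_mul {X Y : Type*} [Fintype X] [Fintype Y] (α : X → ℝ) {β : Y → ℝ}
    (hβ : ∑ y, β y = 1) (A : X → Prop) [DecidablePred A] :
    ∑ z : X × Y with A z.1, α z.1 * β z.2 = ∑ x with A x, α x := by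
  simp only [sum_filter, Fintype.sum_prod_type, ← ite_zero_mul, ← mul_sum, hβ, mul_one]

lemma sum_filter_snd_mul {X Y : Type*} [Fintype X] [Fintype Y] {α : X → ℝ} (β : Y → ℝ)
    (hα : ∑ x, α x = 1) (B : Y → Prop) [DecidablePred B] :
    ∑ z : X × Y with B z.2, α z.1 * β z.2 = ∑ y with B y, β y := by
  rw [sum_filter, Fintype.sum_prod_type, sum_comm]
  simp only [← mul_ite_zero, ← sum_mul, hα, one_mul, sum_filter]

variable {ι : Type*} [Fintype ι] [DecidableEq ι] {κ : ι → Type*} [∀ i, Fintype (κ i)]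
  {u : ∀ i, κ i → ℝ}

lemma sum_pi_prod_eq_one (hu : ∀ i, ∑ y, u i y = 1) :
    ∑ v : ∀ i, κ i, ∏ i, u i (v i) = 1 := by
  rw [← Fintype.prod_sum]
  simp [hu]

lemma sum_filter_pi_prod (hu : ∀ i, ∑ y, u i y = 1) (i : ι) (S : κ i → Prop) [DecidablePred S] :
    ∑ v : ∀ j, κ j with S (v i), ∏ j, u j (v j) = ∑ y with S y, u i y := by
  calc ∑ v : ∀ j, κ j with S (v i), ∏ j, u j (v j)
      = ∑ z : κ i × (∀ j : {j // j ≠ i}, κ j) with S z.1,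
          u i z.1 * ∏ j : {j // j ≠ i}, u j (z.2 j) := by
        rw [sum_filter, sum_filter, ← (Equiv.piSplitAt i κ).sum_comp]
        simp [Fintype.prod_eq_mul_prod_subtype_ne _ i]
    _ = ∑ y with S y, u i y :=
        sum_filter_fst_mul _ (sum_pi_prod_eq_one fun j : {j // j ≠ i} => hu j) S

end Sums

theorem totalDegree_bind₁_le {R σ τ : Type*} [CommSemiring R] (Q : σ → MvPolynomial τ R)
    (p : MvPolynomial σ R) {D : ℕ} (hQ : ∀ i, (Q i).totalDegree ≤ D) :
    (bind₁ Q p).totalDegree ≤ p.totalDegree * D := by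
  rw [← aeval_eq_bind₁, aeval_def, eval₂_eq]
  refine totalDegree_finsetSum_le fun s hs => (totalDegree_mul _ _).trans ?_
  rw [algebraMap_eq, totalDegree_C, zero_add]
  refine (totalDegree_finsetProd _ _).trans ?_
  calc ∑ i ∈ s.support, (Q i ^ s i).totalDegree
      ≤ ∑ i ∈ s.support, s i * D :=
        sum_le_sum fun i _ => (totalDegree_pow _ _).trans (Nat.mul_le_mul_left _ (hQ i))
    _ = (∑ i ∈ s.support, s i) * D := (sum_mul _ _ _).symm
    _ ≤ p.totalDegree * D := Nat.mul_le_mul_right _ (le_totalDegree hs)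

lemma evalBool_bind₁_of_forall {ι τ : Type} {a : τ → Bool} {b : ι → Bool}
    {Q : ι → MvPolynomial τ ℝ} (hQ : ∀ i, evalBool a (Q i) = if b i then 1 else 0)
    (p : MvPolynomial ι ℝ) : evalBool a (bind₁ Q p) = evalBool b p := by
  simp only [evalBool, eval, eval₂Hom_bind₁]
  congr 2
  exact funext hQ

noncomputable def pointIndicator {ι : Type} [Fintype ι] (a : ι → Bool) : MvPolynomial ι ℝ :=
  ∏ i, if a i then X i else 1 - X i

lemma evalBool_pointIndicator {ι : Type} [Fintype ι] (a b : ι → Bool) :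
    evalBool b (pointIndicator a) = if a = b then 1 else 0 := by
  have hfactor : ∀ i, eval (fun i => if b i then (1 : ℝ) else 0)
      (if a i then X i else 1 - X i) = if a i = b i then 1 else 0 := fun i => by
    cases a i <;> cases hb : b i <;> simp [hb]
  simp [evalBool, pointIndicator, hfactor, prod_ite_zero, _root_.funext_iff]

section ProbPoly

variable {ι : Type} {f : (ι → Bool) → Bool} {ε : ℝ} {d : ℕ}

lemma HasProbPoly.mono (hf : HasProbPoly f ε d) {d' : ℕ} (hd : d ≤ d') : HasProbPoly f ε d' :=
  let ⟨K, w, P, hw, hw1, hP, herr⟩ := hf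
  ⟨K, w, P, hw, hw1, fun i => (hP i).trans hd, herr⟩

lemma hasProbPoly_of_fintype {κ : Type} [Fintype κ] (w : κ → ℝ) (P : κ → MvPolynomial ι ℝ)
    (hw : ∀ x, 0 ≤ w x) (hw1 : ∑ x, w x = 1) (hP : ∀ x, (P x).totalDegree ≤ d)
    (herr : ∀ a, ∑ x with evalBool a (P x) ≠ (if f a then 1 else 0), w x ≤ ε) :
    HasProbPoly f ε d := by
  let e := (Fintype.equivFin κ).symm
  refine ⟨Fintype.card κ, w ∘ e, P ∘ e, fun i => hw _, (e.sum_comp w).trans hw1, fun i => hP _,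
    fun a => ?_⟩
  simp only [sum_filter, Function.comp_apply] at herr ⊢
  exact (e.sum_comp _).trans_le (herr a)

lemma exists_hasProbPoly [Fintype ι] (f : (ι → Bool) → Bool) (hε : 0 ≤ ε) :
    ∃ d, HasProbPoly f ε d := by
  let P : MvPolynomial ι ℝ := ∑ a with f a, pointIndicator a
  have hP : ∀ b, evalBool b P = if f b then 1 else 0 := fun b => by
    rw [show evalBool b P = ∑ a with f a, evalBool b (pointIndicator a) from map_sum _ _ _]
    simp [evalBool_pointIndicator]
  exact ⟨P.totalDegree, 1, fun _ => 1, fun _ => P, fun _ => zero_le_one, by simp, fun _ => le_rfl,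
    fun a => by simpa [hP] using hε⟩

lemma hasProbPoly_pdeg [Fintype ι] (f : (ι → Bool) → Bool) (hε : 0 ≤ ε) :
    HasProbPoly f ε (pdeg ε f) :=
  Nat.sInf_mem (exists_hasProbPoly f hε)

lemma pdeg_le_of_hasProbPoly (hf : HasProbPoly f ε d) : pdeg ε f ≤ d :=
  Nat.sInf_le hf

end ProbPoly

theorem HasProbPoly.comp {ι τ : Type} [Fintype ι] [DecidableEq ι] {f : (ι → Bool) → Bool}
    {g : ι → (τ → Bool) → Bool} {ε δ : ℝ} {d e : ℕ}
    (hf : HasProbPoly f ε d) (hg : ∀ i, HasProbPoly (g i) δ e) :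
    HasProbPoly (fun x => f fun i => g i x) (ε + Fintype.card ι * δ) (d * e) := by
  obtain ⟨K, w, P, hw, hw1, hPd, hPerr⟩ := hf
  choose L u Q hu hu1 hQd hQerr using hg
  have hω : ∀ z : Fin K × ∀ i, Fin (L i), 0 ≤ w z.1 * ∏ i, u i (z.2 i) :=
    fun z => mul_nonneg (hw _) (prod_nonneg fun i _ => hu i _)
  refine hasProbPoly_of_fintype (κ := Fin K × ∀ i, Fin (L i)) (fun z => w z.1 * ∏ i, u i (z.2 i))
    (fun z => bind₁ (fun i => Q i (z.2 i)) (P z.1)) hω ?_ ?_ ?_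
  · simp only [Fintype.sum_prod_type, ← mul_sum, sum_pi_prod_eq_one hu1, mul_one, hw1]
  · exact fun z => (totalDegree_bind₁_le _ _ fun i => hQd i (z.2 i)).trans
      (Nat.mul_le_mul_right _ (hPd z.1))
  intro a
  set b := fun i => g i a
  have hbad : ∀ z : Fin K × ∀ i, Fin (L i),
      evalBool a (bind₁ (fun i => Q i (z.2 i)) (P z.1)) ≠ (if f b then 1 else 0) →
        evalBool b (P z.1) ≠ (if f b then 1 else 0) ∨
          ∃ i, evalBool a (Q i (z.2 i)) ≠ if g i a then 1 else 0 := by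
    intro z hz
    by_contra! hgood
    exact hz (hgood.1 ▸ evalBool_bind₁_of_forall hgood.2 _)
  calc _ ≤ _ := sum_filter_le_add_sum_of_imp univ hω hbad
    _ = ∑ j with evalBool b (P j) ≠ (if f b then 1 else 0), w j
          + ∑ i, ∑ y with evalBool a (Q i y) ≠ (if g i a then 1 else 0), u i y := by
        rw [sum_filter_fst_mul _ (sum_pi_prod_eq_one hu1)
          fun j => evalBool b (P j) ≠ if f b then 1 else 0]
        refine congrArg _ (sum_congr rfl fun i _ => ?_)
        rw [sum_filter_snd_mul (fun v : ∀ j, Fin (L j) => ∏ j, u j (v j)) hw1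
          fun v => evalBool a (Q i (v i)) ≠ if g i a then 1 else 0]
        exact sum_filter_pi_prod hu1 i fun y => evalBool a (Q i y) ≠ if g i a then 1 else 0
    _ ≤ ε + ∑ _i : ι, δ := add_le_add (hPerr b) (sum_le_sum fun i _ => hQerr i a)
    _ = ε + Fintype.card ι * δ := by simp

theorem pdeg_composition_general (k m : ℕ)
    (f : (Fin k → Bool) → Bool) (g : Fin k → ((Fin m → Bool) → Bool))
    (h : (Fin m → Bool) → Bool) (hh : ∀ x, h x = f (fun i => g i x))
    (ε δ : ℝ) (hε : 0 ≤ ε) (hδ : 0 ≤ δ) :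
    pdeg (ε + k * δ) h ≤ pdeg ε f * Finset.univ.sup (fun i => pdeg δ (g i)) := by
  obtain rfl : h = fun x => f fun i => g i x := funext hh
  have hg : ∀ i, HasProbPoly (g i) δ (univ.sup fun i => pdeg δ (g i)) := fun i =>
    (hasProbPoly_pdeg (g i) hδ).mono (le_sup (f := fun i => pdeg δ (g i)) (mem_univ i))
  simpa using pdeg_le_of_hasProbPoly ((hasProbPoly_pdeg f hε).comp hg)

theorem pdeg_composition (k m : ℕ)
    (f : (Fin k → Bool) → Bool) (g : Fin k → ((Fin m → Bool) → Bool))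
    (h : (Fin m → Bool) → Bool) (hh : ∀ x, h x = f (fun i => g i x))
    (ε δ : ℝ) (hε : 0 ≤ ε) (hδ : 0 ≤ δ) (hsum : ε + k * δ ≤ 1) :
    pdeg (ε + k * δ) h ≤ pdeg ε f * Finset.univ.sup (fun i => pdeg δ (g i)) :=
  pdeg_composition_general k m f g h hh ε δ hε hδ
end
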